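/- arXiv:math/0310448 — 3 statements merged into one kernel-verified Lean document; each statement's English description precedes it below -/
import Mathlib

section
/- Let A be a Noetherian local ring with maximal ideal m, and let M be a nonzero finitely generated A-module. If M has finite projective dimension over A and A has depth zero (i.e., m is an associated prime of A, meaning there exists a nonzero element of A annihilated by m), then M is free. -/
open CategoryTheory IsLocalRing

noncomputable section

/-- `M` has projective dimension at most `n` over `A`: it admits a projective resolution
which vanishes in degrees above `n`. -/
def ProjDimLE (A : Type) [CommRing A] (M : Type) [AddCommGroup M] [Module A M] (n : ℕ) : Prop :=
  ∃ P : ProjectiveResolution (ModuleCat.of A M), ∀ i > n, Limits.IsZero (P.complex.X i)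

/-- `M` has finite projective dimension over `A`. -/
def FiniteProjDim (A : Type) [CommRing A] (M : Type) [AddCommGroup M] [Module A M] : Prop :=
  ∃ n, ProjDimLE A M n

/-- The projective dimension of `M` over `A` (junk value `0` if it is not finite). -/
def projDim (A : Type) [CommRing A] (M : Type) [AddCommGroup M] [Module A M] : ℕ :=
  sInf {n | ProjDimLE A M n}

/-- The depth of a module `M` over a local ring `A`: the supremum of the lengths of
`M`-regular sequences of elements of the maximal ideal. -/
def moduleDepth (A : Type) [CommRing A] [IsLocalRing A]
    (M : Type) [AddCommGroup M] [Module A M] : ℕ :=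
  sSup {n | ∃ rs : List A, rs.length = n ∧ (∀ r ∈ rs, r ∈ maximalIdeal A) ∧
    RingTheory.Sequence.IsRegular M rs}

end

noncomputable section
open CategoryTheory Limits Function
set_option linter.unusedSectionVars false

namespace ExtAux
variable {C : Type*} [Category C] [Abelian C]

/-- helper: exactness is preserved by postcomposing `g` with a mono -/
lemma exact_postcomp_mono {X₁ X₂ X₃ X₃' : C} {f : X₁ ⟶ X₂} {g : X₂ ⟶ X₃}
    {w : f ≫ g = 0} (h : (ShortComplex.mk f g w).Exact) (m : X₃ ⟶ X₃') [Mono m]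
    {w' : f ≫ (g ≫ m) = 0} : (ShortComplex.mk f (g ≫ m) w').Exact := by
  let e : ShortComplex.mk f g w ⟶ ShortComplex.mk f (g ≫ m) w' :=
    { τ₁ := 𝟙 _, τ₂ := 𝟙 _, τ₃ := m, comm₁₂ := by simp, comm₂₃ := by simp }
  haveI : Epi e.τ₁ := by dsimp [e]; infer_instance
  haveI : IsIso e.τ₂ := by dsimp [e]; infer_instance
  haveI : Mono e.τ₃ := by dsimp [e]; infer_instance
  exact (ShortComplex.exact_iff_of_epi_of_isIso_of_mono e).1 h

/-- helper: exactness is preserved by precomposing `f` with an epi -/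
lemma exact_precomp_epi {X₁' X₁ X₂ X₃ : C} {f : X₁ ⟶ X₂} {g : X₂ ⟶ X₃}
    {w : f ≫ g = 0} (h : (ShortComplex.mk f g w).Exact) (e' : X₁' ⟶ X₁) [Epi e']
    {w' : (e' ≫ f) ≫ g = 0} : (ShortComplex.mk (e' ≫ f) g w').Exact := by
  let e : ShortComplex.mk (e' ≫ f) g w' ⟶ ShortComplex.mk f g w :=
    { τ₁ := e', τ₂ := 𝟙 _, τ₃ := 𝟙 _, comm₁₂ := by simp, comm₂₃ := by simp }
  haveI : Epi e.τ₁ := by dsimp [e]; infer_instance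
  haveI : IsIso e.τ₂ := by dsimp [e]; infer_instance
  haveI : Mono e.τ₃ := by dsimp [e]; infer_instance
  exact (ShortComplex.exact_iff_of_epi_of_isIso_of_mono e).2 h

/-- helper: exactness only depends on the maps -/
lemma exact_congr {X₁ X₂ X₃ : C} {f f' : X₁ ⟶ X₂} {g g' : X₂ ⟶ X₃}
    {w : f ≫ g = 0} (h : (ShortComplex.mk f g w).Exact) (hf : f = f') (hg : g = g')
    {w' : f' ≫ g' = 0} : (ShortComplex.mk f' g' w').Exact := by
  subst hf; subst hg; exact h

variable {K F M : C} (ι : K ⟶ F) (p : F ⟶ M) (w : ι ≫ p = 0)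
variable (Q : ProjectiveResolution K)

def aug : Q.complex.X 0 ⟶ K := (ChainComplex.toSingle₀Equiv Q.complex K Q.π).1
lemma d_aug : Q.complex.d 1 0 ≫ aug Q = 0 := (ChainComplex.toSingle₀Equiv Q.complex K Q.π).2
instance : Epi (aug Q) := inferInstanceAs (Epi (Q.π.f 0))
lemma exact_aug : (ShortComplex.mk (Q.complex.d 1 0) (aug Q) (d_aug Q)).Exact := Q.exact₀

def extComplex : ChainComplex C ℕ :=
  ChainComplex.of
    (fun n => match n with | 0 => F | (m+1) => Q.complex.X m)
    (fun n => match n with | 0 => aug Q ≫ ι | (m+1) => Q.complex.d (m+1) m)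
    (fun n => match n with
      | 0 => by rw [← Category.assoc, d_aug, zero_comp]
      | (m+1) => by simp)

lemma extComplex_d_one_zero : (extComplex ι Q).d 1 0 = aug Q ≫ ι := by unfold extComplex; exact ChainComplex.of_d (V := C) (α := ℕ) (fun n => match n with | 0 => F | (m+1) => Q.complex.X m) (fun n => match n with | 0 => aug Q ≫ ι | (m+1) => Q.complex.d (m+1) m) 0
lemma extComplex_d_succ (m : ℕ) :
    (extComplex ι Q).d (m + 2) (m + 1) = Q.complex.d (m + 1) m := by unfold extComplex; exact ChainComplex.of_d (V := C) (α := ℕ) (fun n => match n with | 0 => F | (m+1) => Q.complex.X m) (fun n => match n with | 0 => aug Q ≫ ι | (m+1) => Q.complex.d (m+1) m) (m+1)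

variable [Mono ι]

lemma extComplex_exactAt_succ (n : ℕ) : (extComplex ι Q).ExactAt (n + 1) := by
  rw [HomologicalComplex.exactAt_iff' _ (n + 2) (n + 1) n (by simp) (by simp)]
  match n with
  | 0 =>
    have h : (ShortComplex.mk (Q.complex.d 1 0) (aug Q ≫ ι)
        (by rw [← Category.assoc, d_aug, zero_comp])).Exact :=
      exact_postcomp_mono (exact_aug Q) ι
    exact exact_congr h (extComplex_d_succ ι Q 0).symm (extComplex_d_one_zero ι Q).symm
  | (m+1) =>
    exact exact_congr (Q.exact_succ m) (extComplex_d_succ ι Q (m+1)).symm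
      (extComplex_d_succ ι Q m).symm

variable [Projective F] [Epi p] (hpe : (ShortComplex.mk ι p w).Exact)

def extResolution : ProjectiveResolution M where
  complex := extComplex ι Q
  projective := fun n => match n with
    | 0 => inferInstanceAs (Projective F)
    | (m+1) => Q.projective m
  π := (ChainComplex.toSingle₀Equiv _ M).symm ⟨p, by
        rw [extComplex_d_one_zero]; show (aug Q ≫ ι) ≫ p = 0; rw [Category.assoc, w, comp_zero]⟩
  quasiIso := ⟨fun n => by
    cases n with
    | zero =>
      rw [ChainComplex.quasiIsoAt₀_iff, ShortComplex.quasiIso_iff_of_zeros']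
      · have h0 : (((ChainComplex.toSingle₀Equiv (extComplex ι Q) M).symm ⟨p, by
              rw [extComplex_d_one_zero]; show (aug Q ≫ ι) ≫ p = 0; rw [Category.assoc, w, comp_zero]⟩).f 0) = p :=
          ChainComplex.toSingle₀Equiv_symm_apply_f_zero _ _
      
        constructor
        · have h : (ShortComplex.mk (aug Q ≫ ι) p
              (by rw [Category.assoc, w, comp_zero])).Exact := exact_precomp_epi hpe (aug Q)
          exact exact_congr h (extComplex_d_one_zero ι Q).symm h0.symm
        · show Epi _
          dsimp [HomologicalComplex.shortComplexFunctor']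
          rw [h0]
          exact (inferInstance : Epi p)
      all_goals rfl
    | succ n =>
      rw [quasiIsoAt_iff_exactAt']
      · exact extComplex_exactAt_succ ι Q n
      · apply ChainComplex.exactAt_succ_single_obj⟩


end ExtAux
namespace ExtAux
section ExtLemmas
variable {A : Type} [CommRing A]

abbrev E (i : ℕ) (X Y : ModuleCat A) : ModuleCat A :=
  ((Ext A (ModuleCat A) i).obj (Opposite.op X)).obj Y

lemma isZero_hom_of_isZero {X Y : ModuleCat A} (h : IsZero X) :
    IsZero (ModuleCat.of A (X ⟶ Y)) := by
  haveI : Subsingleton ↑(ModuleCat.of A (X ⟶ Y)) := ⟨fun f g => h.eq_of_src f g⟩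
  exact ModuleCat.isZero_of_subsingleton _

lemma isZero_E_of_isZero_X {X : ModuleCat A} (P : ProjectiveResolution X) (i : ℕ)
    (h : IsZero (P.complex.X i)) (Y : ModuleCat A) : IsZero (E i X Y) := by
  refine IsZero.of_iso ?_ (P.isoExt i Y)
  rw [← HomologicalComplex.exactAt_iff_isZero_homology, HomologicalComplex.exactAt_iff]
  refine ShortComplex.exact_of_isZero_X₂ _ ?_
  exact isZero_hom_of_isZero (by simpa using h)

variable {K F M : ModuleCat A} (ι : K ⟶ F) (p : F ⟶ M) (w : ι ≫ p = 0)
  (Q : ProjectiveResolution K) [Mono ι] [Projective F] [Epi p]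
  (hpe : (ShortComplex.mk ι p w).Exact)

include ι p w Q hpe in
lemma isZero_E_shift (m : ℕ) (N : ModuleCat A)
    (h : IsZero (E (m + 2) M N)) : IsZero (E (m + 1) K N) := by
  let P := extResolution ι p w Q hpe
  rw [(Q.isoExt (m+1) N).isZero_iff,
    ← HomologicalComplex.exactAt_iff_isZero_homology]
  rw [(P.isoExt (m+2) N).isZero_iff,
    ← HomologicalComplex.exactAt_iff_isZero_homology] at h
  rw [HomologicalComplex.exactAt_iff' _ (m+1) (m+2) (m+3) (by simp) (by simp)] at h
  rw [HomologicalComplex.exactAt_iff' _ m (m+1) (m+2) (by simp) (by simp)]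
  have e1 : (P.complex.linearYonedaObj A N).d (m+1) (m+2)
      = (Q.complex.linearYonedaObj A N).d m (m+1) := by
    rw [ChainComplex.linearYonedaObj_d, ChainComplex.linearYonedaObj_d]
    have : P.complex.d (m+2) (m+1) = Q.complex.d (m+1) m := extComplex_d_succ ι Q m
    rw [this]
    rfl
  have e2 : (P.complex.linearYonedaObj A N).d (m+2) (m+3)
      = (Q.complex.linearYonedaObj A N).d (m+1) (m+2) := by
    rw [ChainComplex.linearYonedaObj_d, ChainComplex.linearYonedaObj_d]
    have : P.complex.d (m+3) (m+2) = Q.complex.d (m+2) (m+1) := extComplex_d_succ ι Q (m+1)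
    rw [this]
    rfl
  exact exact_congr h e1 e2

include p w Q hpe in
lemma retraction_of_isZero_E_one (h : IsZero (E 1 M K)) :
    ∃ ψ : F ⟶ K, ι ≫ ψ = 𝟙 K := by
  let P := extResolution ι p w Q hpe
  rw [(P.isoExt 1 K).isZero_iff, ← HomologicalComplex.exactAt_iff_isZero_homology,
    HomologicalComplex.exactAt_iff' _ 0 1 2 (by simp) (by simp)] at h
  have h' := (ShortComplex.moduleCat_exact_iff _).1 h
  have hg : ((P.complex.linearYonedaObj A K).sc' 0 1 2).g (aug Q) = 0 := by
    show ((P.complex.linearYonedaObj A K).d 1 2) (aug Q) = 0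
    rw [ChainComplex.linearYonedaObj_d]
    show P.complex.d 2 1 ≫ aug Q = 0
    rw [show P.complex.d 2 1 = Q.complex.d 1 0 from extComplex_d_succ ι Q 0]; exact d_aug Q
  obtain ⟨ψ, hψ⟩ := h' (aug Q) hg
  refine ⟨ψ, ?_⟩
  have hψ' : P.complex.d 1 0 ≫ ψ = aug Q := by
    rw [← hψ]
    show _ = ((P.complex.linearYonedaObj A K).d 0 1) ψ
    rw [ChainComplex.linearYonedaObj_d]
    rfl
  rw [show P.complex.d 1 0 = aug Q ≫ ι from extComplex_d_one_zero ι Q] at hψ'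
  replace hψ' : aug Q ≫ ι ≫ ψ = aug Q := (Category.assoc (aug Q) ι ψ).symm.trans hψ'
  have := hψ'
  nth_rewrite 2 [show aug Q = aug Q ≫ 𝟙 K by simp] at this
  exact cancel_epi (aug Q) |>.1 this

end ExtLemmas

variable {A : Type} [CommRing A] [IsLocalRing A]

open IsLocalRing Submodule

/-- if a surjection from `A^(k'+1)` has a kernel element with a unit coordinate, then
`M` is generated by `k'` elements -/
lemma drop_generator_succ {M : Type} [AddCommGroup M] [Module A M] (k' : ℕ)
    (p₀ : (Fin (k' + 1) → A) →ₗ[A] M) (hp₀ : Surjective p₀)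
    (x : Fin (k' + 1) → A) (hx : p₀ x = 0) (i₀ : Fin (k' + 1)) (hunit : IsUnit (x i₀)) :
    ∃ f : (Fin k' → A) →ₗ[A] M, Surjective f := by
  classical
  set u : Fin (k' + 1) → M := fun i => p₀ (Pi.single i 1) with hu'
  have hp₀eq : ∀ y : Fin (k' + 1) → A, p₀ y = ∑ i, y i • u i := by
    intro y
    have : y = ∑ i, y i • (Pi.single i 1 : Fin (k'+1) → A) := by
      ext j
      simp [Finset.sum_apply, Pi.single_apply]
    nth_rewrite 1 [this]
    simp [u]
  have hspan : span A (Set.range u) = ⊤ := by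
    rw [eq_top_iff]
    intro m _
    obtain ⟨y, rfl⟩ := hp₀ m
    rw [hp₀eq]
    exact sum_mem fun i _ => smul_mem _ _ (subset_span ⟨i, rfl⟩)
  set σ : Fin k' → Fin (k' + 1) := i₀.succAbove with hσ
  have hrel : ∑ i, x i • u i = 0 := by rw [← hp₀eq]; exact hx
  have hmemspan : u i₀ ∈ span A (Set.range (u ∘ σ)) := by
    have hsum : x i₀ • u i₀ = -∑ j ∈ Finset.univ.erase i₀, x j • u j := by
      have h2 := hrel
      rw [← Finset.add_sum_erase _ _ (Finset.mem_univ i₀)] at h2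
      exact eq_neg_of_add_eq_zero_left h2
    have hother : (∑ j ∈ Finset.univ.erase i₀, x j • u j) ∈ span A (Set.range (u ∘ σ)) := by
      refine sum_mem fun j hj => smul_mem _ _ (subset_span ?_)
      obtain ⟨l, hl⟩ := Fin.exists_succAbove_eq (Finset.ne_of_mem_erase hj)
      exact ⟨l, by simp [σ, hl]⟩
    have h1 : x i₀ • u i₀ ∈ span A (Set.range (u ∘ σ)) := hsum ▸ neg_mem hother
    have := smul_mem (span A (Set.range (u ∘ σ))) (↑hunit.unit⁻¹) h1
    rwa [smul_smul, IsUnit.val_inv_mul, one_smul] at this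
  have hspan' : span A (Set.range (u ∘ σ)) = ⊤ := by
    rw [eq_top_iff, ← hspan, span_le]
    rintro _ ⟨i, rfl⟩
    rcases eq_or_ne i i₀ with rfl | hne
    · exact hmemspan
    · obtain ⟨l, hl⟩ := Fin.exists_succAbove_eq hne
      exact subset_span ⟨l, by simp [σ, hl]⟩
  refine ⟨Fintype.linearCombination A (u ∘ σ), ?_⟩
  rw [← LinearMap.range_eq_top, Fintype.range_linearCombination, hspan']

lemma drop_generator {M : Type} [AddCommGroup M] [Module A M] : ∀ (n : ℕ)
    (p₀ : (Fin n → A) →ₗ[A] M), Surjective p₀ →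
    ∀ (x : Fin n → A), p₀ x = 0 → ∀ (i₀ : Fin n), IsUnit (x i₀) →
    ∃ f : (Fin (n - 1) → A) →ₗ[A] M, Surjective f
  | 0, _, _, _, _, i₀, _ => i₀.elim0
  | (k' + 1), p₀, hp₀, x, hx, i₀, hunit =>
    drop_generator_succ k' p₀ hp₀ x hx i₀ hunit

lemma minimal_presentation (M : Type) [AddCommGroup M] [Module A M] [Module.Finite A M] :
    ∃ (k : ℕ) (p₀ : (Fin k → A) →ₗ[A] M), Surjective p₀ ∧
      ∀ x ∈ LinearMap.ker p₀, ∀ i, x i ∈ maximalIdeal A := by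
  classical
  let S := {n : ℕ | ∃ f : (Fin n → A) →ₗ[A] M, Surjective f}
  have hS : S.Nonempty := by
    obtain ⟨n, f, hf⟩ := Module.Finite.exists_fin' A M
    exact ⟨n, f, hf⟩
  obtain ⟨p₀, hp₀⟩ : sInf S ∈ S := Nat.sInf_mem hS
  refine ⟨sInf S, p₀, hp₀, ?_⟩
  intro x hx i₀
  by_contra hmem
  have hunit : IsUnit (x i₀) := by
    by_contra hu
    exact hmem (IsLocalRing.mem_maximalIdeal _ |>.2 hu)
  have hpos : sInf S ≠ 0 := fun h0 => (h0 ▸ i₀).elim0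
  obtain ⟨f, hf⟩ := drop_generator (sInf S) p₀ hp₀ x hx i₀ hunit
  have : sInf S - 1 ∈ S := ⟨f, hf⟩
  exact absurd (Nat.sInf_le this) (by omega)


section Main
open IsLocalRing Submodule
variable {A : Type} [CommRing A] [IsNoetherianRing A] [IsLocalRing A]

/-- vanishing of Ext above degree n -/
def ExtVanish (A : Type) [CommRing A] (M : Type) [AddCommGroup M] [Module A M] (n : ℕ) : Prop :=
  ∀ (N : ModuleCat A) (i : ℕ), n < i → IsZero (E i (ModuleCat.of A M) N)

theorem free_of_extVanish (a : A) (ha : a ≠ 0)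
    (hsoc : ∀ x ∈ maximalIdeal A, x * a = 0) (n : ℕ) :
    ∀ (M : Type) [AddCommGroup M] [Module A M] [Module.Finite A M],
      ExtVanish A M n → Module.Free A M := by
  induction n with
  | zero =>
    intro M _ _ _ hV
    -- minimal presentation
    obtain ⟨k, p₀, hsurj, hker⟩ := minimal_presentation (A := A) M
    -- categorical objects
    let Kc : ModuleCat A := ModuleCat.of A ↥(LinearMap.ker p₀)
    let Fc : ModuleCat A := ModuleCat.of A (Fin k → A)
    let Mc : ModuleCat A := ModuleCat.of A M
    let ι : Kc ⟶ Fc := ModuleCat.ofHom (LinearMap.ker p₀).subtype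
    let p : Fc ⟶ Mc := ModuleCat.ofHom p₀
    have w : ι ≫ p = 0 := by
      ext x
      exact x.2
    haveI : Mono ι := (ModuleCat.mono_iff_injective _).2 (Submodule.injective_subtype _)
    haveI : Epi p := (ModuleCat.epi_iff_surjective _).2 hsurj
    haveI : Projective Fc := ModuleCat.projective_of_free (Pi.basisFun A (Fin k))
    have hpe : (ShortComplex.mk ι p w).Exact := by
      rw [ShortComplex.moduleCat_exact_iff]
      intro x hx
      exact ⟨⟨x, hx⟩, rfl⟩
    let Q : ProjectiveResolution Kc := ProjectiveResolution.of Kc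
    have h1 : IsZero (E 1 Mc Kc) := hV Kc 1 (by omega)
    obtain ⟨ψ, hψ⟩ := retraction_of_isZero_E_one ι p w Q hpe h1
    -- M is a retract of Fc, hence projective
    have hS : (ShortComplex.mk ι p w).ShortExact :=
      { exact := hpe }
    let spl : (ShortComplex.mk ι p w).Splitting :=
      ShortComplex.Splitting.ofExactOfRetraction _ hpe ψ hψ inferInstance
    have hsec : spl.s ≫ p = 𝟙 Mc := spl.s_g
    haveI : Module.Projective A M := by
      refine Module.Projective.of_split (M := Fin k → A) (spl.s.hom : M →ₗ[A] (Fin k → A)) p₀ ?_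
      exact congrArg ModuleCat.Hom.hom hsec
    haveI : Module.FinitePresentation A M := Module.finitePresentation_of_projective A M
    exact Module.free_of_flat_of_isLocalRing
  | succ n IH =>
    intro M _ _ _ hV
    by_cases hMs : Subsingleton M
    · exact Module.Free.of_subsingleton A M
    haveI : Nontrivial M := not_subsingleton_iff_nontrivial.1 hMs
    obtain ⟨k, p₀, hsurj, hker⟩ := minimal_presentation (A := A) M
    let K : Type := ↥(LinearMap.ker p₀)
    haveI : Module.Finite A K := by
      haveI : IsNoetherian A (Fin k → A) := inferInstance
      exact Module.Finite.iff_fg.2 (IsNoetherian.noetherian _)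
    let Kc : ModuleCat A := ModuleCat.of A K
    let Fc : ModuleCat A := ModuleCat.of A (Fin k → A)
    let Mc : ModuleCat A := ModuleCat.of A M
    let ι : Kc ⟶ Fc := ModuleCat.ofHom (LinearMap.ker p₀).subtype
    let p : Fc ⟶ Mc := ModuleCat.ofHom p₀
    have w : ι ≫ p = 0 := by
      ext x
      exact x.2
    haveI : Mono ι := (ModuleCat.mono_iff_injective _).2 (Submodule.injective_subtype _)
    haveI : Epi p := (ModuleCat.epi_iff_surjective _).2 hsurj
    haveI : Projective Fc := ModuleCat.projective_of_free (Pi.basisFun A (Fin k))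
    have hpe : (ShortComplex.mk ι p w).Exact := by
      rw [ShortComplex.moduleCat_exact_iff]
      intro x hx
      exact ⟨⟨x, hx⟩, rfl⟩
    let Q : ProjectiveResolution Kc := ProjectiveResolution.of Kc
    -- dimension shift: K has Ext vanishing above n
    have hVK : ExtVanish A K n := by
      intro N i hi
      obtain ⟨m, rfl⟩ : ∃ m, i = m + 1 := ⟨i - 1, by omega⟩
      exact isZero_E_shift ι p w Q hpe m N (hV N (m + 2) (by omega))
    haveI hKfree : Module.Free A K := IH K hVK
    -- socle argument : K = 0
    haveI : Subsingleton K := by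
      by_contra hKs
      haveI : Nontrivial K := not_subsingleton_iff_nontrivial.1 hKs
      let b := Module.Free.chooseBasis A K
      obtain ⟨j⟩ := b.index_nonempty
      have hzero : a • b j = 0 := by
        ext1
        funext i
        show a * ((b j : Fin k → A) i) = 0
        rw [mul_comm]
        exact hsoc _ (hker _ (b j).2 i) 
      have : a = 0 := by
        have h1 := congrArg b.repr hzero
        rw [map_smul, map_zero, b.repr_self] at h1
        have h2 := DFunLike.congr_fun h1 j
        simpa using h2
      exact ha this
    have hinj : Function.Injective p₀ := by
      rw [← LinearMap.ker_eq_bot]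
      rw [Submodule.eq_bot_iff]
      intro x hx
      have : (⟨x, hx⟩ : K) = 0 := Subsingleton.elim _ _
      simpa using congrArg Subtype.val this
    exact Module.Free.of_equiv (LinearEquiv.ofBijective p₀ ⟨hinj, hsurj⟩)

end Main
end ExtAux
end

/-- Over a Noetherian local ring `A` of depth zero (there is a nonzero
element of `A` annihilated by the maximal ideal), every nonzero finitely generated module
of finite projective dimension is free. -/
theorem stmt2 (A : Type) [CommRing A] [IsNoetherianRing A] [IsLocalRing A]
    (hA : ∃ a : A, a ≠ 0 ∧ ∀ x ∈ maximalIdeal A, x * a = 0)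
    (M : Type) [AddCommGroup M] [Module A M] [Module.Finite A M] [Nontrivial M]
    (hM : FiniteProjDim A M) :
    Module.Free A M := by
  obtain ⟨a, ha, hsoc⟩ := hA
  obtain ⟨n, P, hP⟩ := hM
  refine ExtAux.free_of_extVanish a ha hsoc n M ?_
  intro N i hi
  exact ExtAux.isZero_E_of_isZero_X P i (hP i hi) N
end

section
/- Acyclicity Lemma (Peskine–Szpiro): let A be a Noetherian local ring and let 0 → M_n → M_{n-1} → ⋯ → M_0 be a complex of finitely generated A-modules whose homology modules all have finite length. If each module M_i has depth at least r, then H_i of the complex vanishes for n ≥ i ≥ n - r + 1. -/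
/-!
Measure depth through `Ext`: say `depth_T Y ≥ k` when `Ext^i(X, Y) = 0` for all `i < k` and all
test objects `X ∈ T`, here the modules of finite length. Rees' theorem turns a regular sequence of
length `r` on a finite module `M` over a Noetherian local ring into `depth_T M ≥ r`.

Let `B_i` be the image of `d : C_{i+1} → C_i`. Then `B_n = 0`, and whenever `H_{i+1} = 0` the
sequence `0 → B_{i+1} → C_{i+1} → B_i → 0` is short exact, so `depth_T B_i` is at least
`min (depth_T B_{i+1} - 1, r)`. On the other hand `H_i` embeds into `C_i / B_i`, and the long exact
`Ext(H_i, -)`-sequence of `0 → B_i → C_i → C_i / B_i → 0` shows that this embedding is zero as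
soon as `Hom(H_i, C_i) = 0` and `Ext^1(H_i, B_i) = 0`. Descending from `i = n`, both hold while
`n - i < r`.
-/

open CategoryTheory IsLocalRing

universe w v u

namespace CategoryTheory

open Limits

variable {C : Type u} [Category.{v} C] [Abelian C]

namespace Abelian

def ExtDepthGE [HasExt.{w} C] (T : ObjectProperty C) (k : ℕ) (Y : C) : Prop :=
  ∀ ⦃X : C⦄, T X → ∀ i < k, Subsingleton (Ext X Y i)

lemma ExtDepthGE.of_le [HasExt.{w} C] {T : ObjectProperty C} {k k' : ℕ} {Y : C}
    (h : ExtDepthGE T k Y) (hk : k' ≤ k) : ExtDepthGE T k' Y :=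
  fun _ hX i hi => h hX i (lt_of_lt_of_le hi hk)

lemma image_ι_comp_factorThruImage_eq_zero {X Y Z : C} {f : X ⟶ Y} {g : Y ⟶ Z}
    (h : f ≫ g = 0) : Abelian.image.ι f ≫ Abelian.factorThruImage g = 0 := by
  simp [← cancel_mono (Abelian.image.ι g), Abelian.image_ι_comp_eq_zero h]

end Abelian

open Abelian

lemma Limits.IsZero.extDepthGE [HasExt.{w} C] {Y : C} (hY : IsZero Y) (T : ObjectProperty C)
    (k : ℕ) : ExtDepthGE T k Y := by
  refine fun X _ i _ => ⟨fun x y => ?_⟩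
  rw [← Ext.comp_mk₀_id x, ← Ext.comp_mk₀_id y, hY.eq_of_src (𝟙 Y) 0, Ext.mk₀_zero,
    Ext.comp_zero, Ext.comp_zero]

namespace ShortComplex

lemma Exact.shortExact_imageι_factorThruImage {S : ShortComplex C} (hS : S.Exact) :
    (ShortComplex.mk _ _ (image_ι_comp_factorThruImage_eq_zero S.zero)).ShortExact where
  exact := (exact_iff_of_epi_of_isIso_of_mono
    (S₁ := ShortComplex.mk _ _ (image_ι_comp_factorThruImage_eq_zero S.zero))
    (S₂ := ShortComplex.mk _ _ (Abelian.image_ι_comp_eq_zero S.zero))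
    { τ₁ := 𝟙 _, τ₂ := 𝟙 _, τ₃ := Abelian.image.ι S.g }).2 ((S.exact_iff_exact_image_ι).1 hS)

namespace ShortExact

variable [HasExt.{w} C] {S : ShortComplex C} (hS : S.ShortExact)
include hS

lemma extDepthGE_X₃ {T : ObjectProperty C} {k : ℕ} (h₁ : ExtDepthGE T (k + 1) S.X₁)
    (h₂ : ExtDepthGE T k S.X₂) : ExtDepthGE T k S.X₃ := by
  refine fun X hX i hi => ⟨fun x y => ?_⟩
  have := h₁ hX (i + 1) (by omega)
  have := h₂ hX i hi
  obtain ⟨x', hx'⟩ := Ext.covariant_sequence_exact₃ X hS (x - y) rfl (Subsingleton.elim _ _)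
  rw [← sub_eq_zero, ← hx', Subsingleton.elim x' 0, Ext.zero_comp]

lemma eq_zero_of_subsingleton_ext {X : C} (h₂ : Subsingleton (Ext X S.X₂ 0))
    (h₁ : Subsingleton (Ext X S.X₁ 1)) (φ : X ⟶ S.X₃) : φ = 0 := by
  obtain ⟨x, hx⟩ := Ext.covariant_sequence_exact₃ X hS (Ext.mk₀ φ) rfl (Subsingleton.elim _ _)
  rwa [Subsingleton.elim x 0, Ext.zero_comp, eq_comm, Ext.mk₀_eq_zero_iff] at hx

end ShortExact

end ShortComplex

end CategoryTheory

namespace ChainComplex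

open Limits Abelian

variable {C : Type u} [Category.{v} C] [Abelian C] (K : ChainComplex C ℕ)

lemma shortExact_imageι_pOpcycles (i : ℕ) :
    (ShortComplex.mk (Abelian.image.ι (K.d (i + 1) i)) (K.pOpcycles i)
      (by simp [← cancel_epi (Abelian.factorThruImage (K.d (i + 1) i))])).ShortExact where
  exact := ShortComplex.exact_of_g_is_cokernel _ <|
    isCokernelOfComp _ _ (K.opcyclesIsCokernel (i + 1) i (by simp)) _ (Abelian.image.fac _)

variable [HasExt.{w} C] {T : ObjectProperty C}

lemma isZero_homology_of_extDepthGE_image {i : ℕ} (hH : T (K.homology i))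
    (hB : ExtDepthGE T 2 (Abelian.image (K.d (i + 1) i)))
    (hX : ExtDepthGE T 1 (K.X i)) : IsZero (K.homology i) :=
  IsZero.of_mono_eq_zero (K.homologyι i) <|
    (K.shortExact_imageι_pOpcycles i).eq_zero_of_subsingleton_ext
      (hX hH 0 one_pos) (hB hH 1 one_lt_two) _

lemma extDepthGE_image_of_exactAt {i k : ℕ} (hK : K.ExactAt (i + 1))
    (hB : ExtDepthGE T (k + 1) (Abelian.image (K.d (i + 2) (i + 1))))
    (hX : ExtDepthGE T k (K.X (i + 1))) :
    ExtDepthGE T k (Abelian.image (K.d (i + 1) i)) :=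
  ((K.exactAt_iff' (i + 2) (i + 1) i (by simp) (by simp)).1
    hK).shortExact_imageι_factorThruImage.extDepthGE_X₃ hB hX

variable {n r : ℕ} (hK : ∀ i > n, IsZero (K.X i)) (hX : ∀ i ≤ n, ExtDepthGE T r (K.X i))
  (hH : ∀ i, T (K.homology i))
include hK hX hH

lemma extDepthGE_image_of_extDepthGE {k : ℕ} (hk : k < r) {i : ℕ} (hi : i + k = n) :
    ExtDepthGE T (r - k + 1) (Abelian.image (K.d (i + 1) i)) := by
  induction k generalizing i with
  | zero =>
    exact (IsZero.of_epi (Abelian.factorThruImage _) (hK (i + 1) (by omega))).extDepthGE _ _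
  | succ k ih =>
    have hB := ih (by omega) (i := i + 1) (by omega)
    have hX' := hX (i + 1) (by omega)
    have hexact : K.ExactAt (i + 1) := (K.exactAt_iff_isZero_homology _).2 <|
      K.isZero_homology_of_extDepthGE_image (hH _) (hB.of_le (by omega)) (hX'.of_le (by omega))
    exact K.extDepthGE_image_of_exactAt hexact (hB.of_le (by omega)) (hX'.of_le (by omega))

theorem isZero_homology_of_extDepthGE {i : ℕ} (hin : i ≤ n) (hri : n < i + r) :
    IsZero (K.homology i) :=
  K.isZero_homology_of_extDepthGE_image (hH i)
    ((K.extDepthGE_image_of_extDepthGE hK hX hH (k := n - i) (by omega) (by omega)).of_le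
      (by omega))
    ((hX i hin).of_le (by omega))

end ChainComplex

open Abelian RingTheory.Sequence

lemma IsFiniteLength.support_subset_zeroLocus_maximalIdeal {A : Type u} [CommRing A]
    [IsLocalRing A] {N : Type v} [AddCommGroup N] [Module A N] (h : IsFiniteLength A N) :
    Module.support A N ⊆ PrimeSpectrum.zeroLocus (maximalIdeal A) := by
  induction h with
  | of_subsingleton => simp [Module.support_eq_empty]
  | @of_simple_quotient M _ _ N _ _ ih =>
    rw [Module.support_of_exact (LinearMap.exact_subtype_mkQ N) N.injective_subtype
      N.mkQ_surjective]
    refine Set.union_subset ih fun p hp => ?_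
    rw [PrimeSpectrum.mem_zeroLocus,
      ← eq_maximalIdeal (IsSimpleModule.annihilator_isMaximal (R := A) (M := M ⧸ N))]
    exact Module.annihilator_le_of_mem_support hp

lemma exists_isRegular_length_eq_moduleDepth {A : Type} [CommRing A] [IsLocalRing A]
    {M : Type} [AddCommGroup M] [Module A M] (h : 0 < moduleDepth A M) :
    ∃ rs : List A, rs.length = moduleDepth A M ∧ (∀ r ∈ rs, r ∈ maximalIdeal A) ∧
      IsRegular M rs := by
  -- `sSup` is `0` on empty and on unbounded sets of naturals, so a positive depth is attained.
  refine (Nat.sSup_mem (s := {n | ∃ rs : List A, rs.length = n ∧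
    (∀ r ∈ rs, r ∈ maximalIdeal A) ∧ IsRegular M rs}) ?_ ?_ :)
  · by_contra hne
    rw [Set.not_nonempty_iff_eq_empty] at hne
    rw [moduleDepth, hne, csSup_empty] at h
    exact lt_irrefl 0 h
  · by_contra hbdd
    rw [moduleDepth, Nat.sSup_of_not_bddAbove hbdd] at h
    exact lt_irrefl 0 h

lemma extDepthGE_of_le_moduleDepth {A : Type} [CommRing A] [IsLocalRing A] [IsNoetherianRing A]
    (M : ModuleCat A) [Module.Finite A M] {r : ℕ} (h : r ≤ moduleDepth A M) :
    ExtDepthGE (fun N : ModuleCat A => IsFiniteLength A N) r M := by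
  intro N hN i hi
  obtain ⟨rs, hlen, hmem, hreg⟩ :=
    exists_isRegular_length_eq_moduleDepth (by omega : 0 < moduleDepth A M)
  have := hreg.nontrivial
  have := (isFiniteLength_iff_isNoetherian_isArtinian.1 hN).1
  exact ModuleCat.subsingleton_ext_of_exists_isRegular (maximalIdeal A) N
    hN.support_subset_zeroLocus_maximalIdeal M
    (Submodule.top_ne_ideal_smul_of_le_jacobson_annihilator
      (maximalIdeal_le_jacobson _)).symm.lt_top
    rs hmem hreg i (by omega)

/-- Acyclicity Lemma of Peskine–Szpiro. Let
`0 → M_n → ⋯ → M_0` be a complex of finitely generated modules over a Noetherian local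
ring whose homology has finite length.  If each `M_i` (for `i ≤ n`) has depth at least
`r`, then `H_i` vanishes for `n ≥ i ≥ n - r + 1`. -/
theorem stmt5 (A : Type) [CommRing A] [IsNoetherianRing A] [IsLocalRing A]
    (n r : ℕ) (C : ChainComplex (ModuleCat A) ℕ)
    (hbdd : ∀ i > n, Limits.IsZero (C.X i))
    (hfg : ∀ i, Module.Finite A (C.X i))
    (hdepth : ∀ i ≤ n, r ≤ moduleDepth A (C.X i))
    (hfl : ∀ i, IsFiniteLength A (C.homology i)) :
    ∀ i : ℕ, (n : ℤ) - r + 1 ≤ i → i ≤ n → Limits.IsZero (C.homology i) := by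
  intro i hri hin
  refine C.isZero_homology_of_extDepthGE (T := fun N => IsFiniteLength A N) (r := r) hbdd
    (fun j hj => ?_) hfl hin (by omega)
  have := hfg j
  exact extDepthGE_of_le_moduleDepth (C.X j) (hdepth j hj)
end

section
/- Hilbert's theorem: let A be a standard graded ring with A_0 a field, finitely generated over A_0 by A_1, and let M be a finitely generated graded A-module. Then there exists a polynomial P_M with rational coefficients such that P_M(n) = dim_{A_0}(M_n) for all sufficiently large integers n. -/
noncomputable section

/-- A grading `𝒜` on a `k`-algebra `A` is *standard graded* if `𝒜 0` consists of the
scalars and `A` is generated over `k` by the finitely generated degree-one part. -/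
structure IsStandardGraded (k : Type) [Field k] (A : Type) [CommRing A] [Algebra k A]
    (𝒜 : ℕ → Submodule k A) [GradedAlgebra 𝒜] : Prop where
  degree_zero : 𝒜 0 = LinearMap.range (Algebra.linearMap k A)
  adjoin_one : Algebra.adjoin k ((𝒜 1 : Submodule k A) : Set A) = ⊤
  finite_one : Module.Finite k (𝒜 1)

/-- `ℳ` is a grading of the `A`-module `M` compatible with the grading `𝒜` of `A`. -/
structure IsGradedModule (k : Type) [Field k] (A : Type) [CommRing A] [Algebra k A]
    (𝒜 : ℕ → Submodule k A) (M : Type) [AddCommGroup M] [Module k M] [Module A M]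
    [IsScalarTower k A M] (ℳ : ℕ → Submodule k M) [DirectSum.Decomposition ℳ] : Prop where
  smul_mem : ∀ i j : ℕ, ∀ a ∈ 𝒜 i, ∀ m ∈ ℳ j, a • m ∈ ℳ (i + j)

end

open DirectSum Submodule Polynomial

set_option maxHeartbeats 1000000
set_option synthInstance.maxHeartbeats 400000
set_option linter.unusedVariables false
set_option linter.unusedSectionVars false
set_option linter.unnecessarySimpa false


open Polynomial Finset

private lemma hilb_sum_pow (p : ℕ) : ∃ R : Polynomial ℚ, ∀ n : ℕ,
    R.eval (n : ℚ) = ∑ k ∈ range n, (k : ℚ) ^ p := by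
  refine ⟨∑ i ∈ range (p + 1),
      C (_root_.bernoulli i * ((p + 1).choose i) / (p + 1)) * X ^ (p + 1 - i),
    fun n => ?_⟩
  rw [sum_range_pow, eval_finset_sum]
  refine Finset.sum_congr rfl fun i _ => ?_
  simp [div_mul_eq_mul_div]

private lemma hilb_sum_poly (Q : Polynomial ℚ) : ∃ R : Polynomial ℚ, ∀ n : ℕ,
    R.eval (n : ℚ) = ∑ k ∈ range n, Q.eval (k : ℚ) := by
  choose R hR using hilb_sum_pow
  refine ⟨∑ j ∈ range (Q.natDegree + 1), C (Q.coeff j) * R j, fun n => ?_⟩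
  rw [eval_finset_sum]
  simp only [eval_mul, eval_C, hR, Finset.mul_sum]
  rw [Finset.sum_comm]
  refine Finset.sum_congr rfl fun k _ => ?_
  rw [Polynomial.eval_eq_sum_range]

private lemma hilb_poly_of_diff (g : ℕ → ℚ) (Q : Polynomial ℚ) (N₃ : ℕ)
    (h : ∀ n ≥ N₃, g (n + 1) = g n + Q.eval (n : ℚ)) :
    ∃ P : Polynomial ℚ, ∃ N₀ : ℕ, ∀ n ≥ N₀, P.eval (n : ℚ) = g n := by
  obtain ⟨R, hR⟩ := hilb_sum_poly Q
  refine ⟨R + C (g N₃ - R.eval (N₃ : ℚ)), N₃, fun n hn => ?_⟩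
  obtain ⟨m, rfl⟩ := Nat.le.dest hn
  induction m with
  | zero => simp
  | succ m ih =>
    have h1 := h (N₃ + m) (Nat.le_add_right _ _)
    have h2 : ∀ j : ℕ, R.eval ((j:ℚ) + 1) = R.eval (j : ℚ) + Q.eval (j : ℚ) := by
      intro j
      have := hR (j + 1)
      rw [Finset.sum_range_succ, ← hR j] at this
      push_cast at this
      rw [this]
    simp only [eval_add, eval_C] at ih ⊢
    have hc : ((N₃ + (m+1) : ℕ) : ℚ) = ((N₃ + m : ℕ) : ℚ) + 1 := by push_cast; ring
    rw [hc, h2, ← Nat.add_assoc, h1]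
    have := ih (Nat.le_add_right _ _)
    linarith


open Submodule

variable {k : Type} [Field k] {A : Type} [CommRing A] [Algebra k A]
  {M : Type} [AddCommGroup M] [Module k M] [Module A M] [IsScalarTower k A M]

/-- Decomposition `B = B' + B·y` where `B = adjoin (x₁,…,x_d,y)`, `B' = adjoin (x₁,…,x_d)`. -/
private lemma hilb_mem_split {d : ℕ} (x : Fin (d + 1) → A) {b : A}
    (hb : b ∈ Algebra.adjoin k (Set.range x)) :
    ∃ b' ∈ Algebra.adjoin k (Set.range (x ∘ Fin.castSucc)),
      ∃ c ∈ Algebra.adjoin k (Set.range x), b = b' + c * x (Fin.last d) := by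
  set B' := Algebra.adjoin k (Set.range (x ∘ Fin.castSucc)) with hB'
  set B := Algebra.adjoin k (Set.range x) with hB
  have hB'B : B' ≤ B := Algebra.adjoin_mono (by
    rintro _ ⟨i, rfl⟩; exact ⟨i.castSucc, rfl⟩)
  induction hb using Algebra.adjoin_induction with
  | mem z hz =>
    obtain ⟨i, rfl⟩ := hz
    refine Fin.lastCases ?_ ?_ i
    · exact ⟨0, zero_mem _, 1, one_mem _, by ring⟩
    · intro i
      exact ⟨x i.castSucc, Algebra.subset_adjoin ⟨i, rfl⟩, 0, zero_mem _, by ring⟩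
  | algebraMap r =>
    exact ⟨algebraMap k A r, Subalgebra.algebraMap_mem _ r, 0, zero_mem _, by ring⟩
  | add u v hu hv ihu ihv =>
    obtain ⟨b₁, hb₁, c₁, hc₁, rfl⟩ := ihu
    obtain ⟨b₂, hb₂, c₂, hc₂, rfl⟩ := ihv
    exact ⟨b₁ + b₂, add_mem hb₁ hb₂, c₁ + c₂, add_mem hc₁ hc₂, by ring⟩
  | mul u v hu hv ihu ihv =>
    obtain ⟨b₁, hb₁, c₁, hc₁, rfl⟩ := ihu
    obtain ⟨b₂, hb₂, c₂, hc₂, rfl⟩ := ihv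
    refine ⟨b₁ * b₂, mul_mem hb₁ hb₂,
      b₁ * c₂ + c₁ * b₂ + c₁ * (c₂ * x (Fin.last d)),
      add_mem (add_mem (mul_mem (hB'B hb₁) hc₂) (mul_mem hc₁ (hB'B hb₂)))
        (mul_mem hc₁ (mul_mem hc₂ (Algebra.subset_adjoin ⟨Fin.last d, rfl⟩))), by ring⟩

/-- If `y • t ⊆ L₀` for an `A`-submodule `L₀`, then the `B`-span of `t` is contained in
`L₀ + B'-span of t`, where `B = B'[y]`. -/
private lemma hilb_span_reduce {d : ℕ} (x : Fin (d + 1) → A) (L₀ : Submodule A M)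
    (t : Set M) (hyt : ∀ w ∈ t, x (Fin.last d) • w ∈ L₀) :
    (span ↥(Algebra.adjoin k (Set.range x)) t).restrictScalars k ≤
      L₀.restrictScalars k ⊔
        (span ↥(Algebra.adjoin k (Set.range (x ∘ Fin.castSucc))) t).restrictScalars k := by
  set y := x (Fin.last d)
  set B' := Algebra.adjoin k (Set.range (x ∘ Fin.castSucc))
  set B := Algebra.adjoin k (Set.range x)
  -- y • (span B' t) ⊆ L₀
  have hyspan : ∀ v ∈ (span ↥B' t).restrictScalars k, y • v ∈ L₀ := by
    intro v hv
    induction hv using Submodule.span_induction with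
    | mem w hw => exact hyt w hw
    | zero => simpa using zero_mem L₀
    | add u v hu hv ihu ihv => rw [smul_add]; exact add_mem ihu ihv
    | smul b v hv ihv =>
      have : y • ((b : A) • v) = (b : A) • (y • v) := smul_comm _ _ _
      exact this ▸ Submodule.smul_mem _ _ ihv
  intro v hv
  induction hv using Submodule.span_induction with
  | mem w hw =>
    exact Submodule.mem_sup_right (Submodule.subset_span hw)
  | zero => exact zero_mem _
  | add u v hu hv ihu ihv => exact add_mem ihu ihv
  | smul b v hv ihv =>
    obtain ⟨u, hu, w, hw, rfl⟩ := Submodule.mem_sup.mp ihv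
    obtain ⟨b', hb', c, hc, hbeq⟩ := hilb_mem_split x b.2
    have h1 : (b : A) • u ∈ L₀ := Submodule.smul_mem _ _ hu
    have h2 : (b : A) • w ∈
        L₀.restrictScalars k ⊔ (span ↥B' t).restrictScalars k := by
      rw [hbeq, add_smul, mul_smul]
      refine add_mem (Submodule.mem_sup_right ?_) (Submodule.mem_sup_left ?_)
      · show ((⟨b', hb'⟩ : ↥B') • w) ∈ span ↥B' t
        exact Submodule.smul_mem _ _ hw
      · exact Submodule.smul_mem _ _ (hyspan w hw)
    have : b • (u + w) = (b : A) • u + (b : A) • w := by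
      rw [← smul_add]; rfl
    rw [this]
    exact add_mem (Submodule.mem_sup_left h1) h2

set_option maxHeartbeats 1000000
set_option synthInstance.maxHeartbeats 400000

open Submodule

variable {k : Type} [Field k] {A : Type} [CommRing A] [Algebra k A]
  {M : Type} [AddCommGroup M] [Module k M] [Module A M] [IsScalarTower k A M]

/-- Over a Noetherian subalgebra `B`, if `N ⊆ N' + B·s` then any intermediate
`A`-submodule `K` (with `N' ≤ K ≤ N`) is also of the form `N' + B·t` with `t ⊆ K` finite. -/
private lemma hilb_fg_sub (B : Subalgebra k A) (hB : IsNoetherianRing ↥B)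
    (N' N K : Submodule A M) (hN'K : N' ≤ K) (hKN : K ≤ N) (s : Finset M)
    (hfg : N.restrictScalars k ≤
      N'.restrictScalars k ⊔ (span ↥B (s : Set M)).restrictScalars k) :
    ∃ t : Finset M, ↑t ⊆ (K : Set M) ∧ K.restrictScalars k ≤
      N'.restrictScalars k ⊔ (span ↥B (t : Set M)).restrictScalars k := by
  classical
  set R := ↥B
  set N'R : Submodule R M := N'.restrictScalars R
  set π : M →ₗ[R] M ⧸ N'R := N'R.mkQ
  set P : Submodule R (M ⧸ N'R) := span R (π '' (s : Set M)) with hP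
  have hPfg : P.FG := Submodule.fg_span ((s.finite_toSet).image _)
  have hPnoeth : IsNoetherian R ↥P := isNoetherian_of_fg_of_noetherian P hPfg
  set JK : Submodule R (M ⧸ N'R) := Submodule.map π (K.restrictScalars R) with hJK
  have hJKP : JK ≤ P := by
    rintro _ ⟨v, hv, rfl⟩
    have hvN : v ∈ N.restrictScalars k := hKN hv
    obtain ⟨a, ha, u, hu, rfl⟩ := Submodule.mem_sup.mp (hfg hvN)
    have : π (a + u) = π u := by
      have : π a = 0 := (Submodule.Quotient.mk_eq_zero _).mpr ha
      simp [map_add, this]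
    rw [this]
    rw [hP, ← Submodule.map_span]
    exact ⟨u, hu, rfl⟩
  -- JK is finitely generated
  have hJKfg : JK.FG := by
    have h1 : (JK.comap P.subtype).FG := hPnoeth.noetherian _
    have h2 : Submodule.map P.subtype (JK.comap P.subtype) = JK := by
      rw [Submodule.map_comap_eq, Submodule.range_subtype]
      exact inf_eq_right.mpr hJKP
    exact h2 ▸ h1.map P.subtype
  obtain ⟨T, hT⟩ := hJKfg
  -- lift generators of JK to K
  have hlift : ∀ g : M ⧸ N'R, g ∈ JK → ∃ w, w ∈ K ∧ π w = g := by
    rintro _ ⟨w, hw, rfl⟩; exact ⟨w, hw, rfl⟩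
  choose wit hwitK hwitπ using hlift
  refine ⟨T.attach.image (fun g => wit g.1 (hT ▸ Submodule.subset_span g.2 : g.1 ∈ JK)), ?_, ?_⟩
  · intro w hw
    simp only [Finset.coe_image, Set.mem_image] at hw
    obtain ⟨g, _, rfl⟩ := hw
    exact hwitK _ _
  · intro v hv
    have hπv : π v ∈ JK := ⟨v, hv, rfl⟩
    have : π v ∈ span R (π '' ↑(T.attach.image
        (fun g => wit g.1 (hT ▸ Submodule.subset_span g.2 : g.1 ∈ JK)))) := by
      rw [← hT] at hπv
      refine Submodule.span_le.mpr ?_ hπv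
      intro g hg
      apply Submodule.subset_span
      refine ⟨wit g (hT ▸ Submodule.subset_span hg), ?_, hwitπ _ _⟩
      simp only [Finset.coe_image, Set.mem_image, Finset.mem_coe, Finset.mem_attach]
      exact ⟨⟨g, hg⟩, trivial, rfl⟩
    rw [← Submodule.map_span] at this
    obtain ⟨u, hu, huv⟩ := this
    have hdiff : v - u ∈ N'R := by
      rw [← Submodule.Quotient.mk_eq_zero N'R]
      have : π (v - u) = π v - π u := map_sub _ _ _
      show π (v - u) = 0
      rw [this, huv, sub_self]
    refine Submodule.mem_sup.mpr ⟨v - u, hdiff, u, hu, by abel⟩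

open DirectSum Submodule


section Proj

variable {k : Type} [Field k] {M : Type} [AddCommGroup M] [Module k M]
  (ℳ : ℕ → Submodule k M) [Decomposition ℳ]

/-- The degree-`n` projection, as an endomorphism of `M`. -/
noncomputable def hπ (n : ℕ) : M →ₗ[k] M :=
  (ℳ n).subtype ∘ₗ (DFinsupp.lapply n) ∘ₗ (decomposeLinearEquiv ℳ : M →ₗ[k] ⨁ n, ℳ n)

lemma hπ_mem (n : ℕ) (v : M) : hπ ℳ n v ∈ ℳ n := by
  simp only [hπ, LinearMap.coe_comp, Function.comp_apply, LinearEquiv.coe_coe,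
    decomposeLinearEquiv_apply, DFinsupp.lapply_apply, Submodule.coe_subtype]
  exact Submodule.coe_mem _

lemma hπ_same {n : ℕ} {v : M} (h : v ∈ ℳ n) : hπ ℳ n v = v := by
  simp only [hπ, LinearMap.coe_comp, Function.comp_apply, LinearEquiv.coe_coe,
    decomposeLinearEquiv_apply, DFinsupp.lapply_apply, Submodule.coe_subtype]
  erw [decompose_of_mem_same ℳ h]

lemma hπ_ne {n m : ℕ} {v : M} (h : v ∈ ℳ n) (hnm : n ≠ m) : hπ ℳ m v = 0 := by
  simp only [hπ, LinearMap.coe_comp, Function.comp_apply, LinearEquiv.coe_coe,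
    decomposeLinearEquiv_apply, DFinsupp.lapply_apply, Submodule.coe_subtype]
  erw [decompose_of_mem_ne ℳ h hnm]

lemma hπ_sum (v : M) : ∃ s : Finset ℕ, v = ∑ n ∈ s, hπ ℳ n v := by
  classical
  refine ⟨(decompose ℳ v).support, ?_⟩
  simp only [hπ, LinearMap.coe_comp, Function.comp_apply, LinearEquiv.coe_coe,
    decomposeLinearEquiv_apply, DFinsupp.lapply_apply, Submodule.coe_subtype]
  exact (sum_support_decompose ℳ v).symm

/-- Component lemma: degree-`n` components of elements of `⨆ m, q m` lie in `q n`,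
provided `q m ≤ ℳ m` for all `m`. -/
lemma hπ_iSup {q : ℕ → Submodule k M} (hq : ∀ m, q m ≤ ℳ m) (n : ℕ) {v : M}
    (hv : v ∈ ⨆ m, q m) : hπ ℳ n v ∈ q n := by
  have hmap : Submodule.map (hπ ℳ n) (⨆ m, q m) ≤ q n := by
    rw [Submodule.map_iSup]
    refine iSup_le fun m => ?_
    rintro _ ⟨w, hw, rfl⟩
    by_cases h : m = n
    · subst h; rw [hπ_same ℳ (hq m hw)]; exact hw
    · rw [hπ_ne ℳ (hq m hw) h]; exact zero_mem _
  exact hmap ⟨v, hv, rfl⟩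

lemma hmem_of_iSup {q : ℕ → Submodule k M} (hq : ∀ m, q m ≤ ℳ m) {n : ℕ} {v : M}
    (hvn : v ∈ ℳ n) (hv : v ∈ ⨆ m, q m) : v ∈ q n := by
  have := hπ_iSup ℳ hq n hv
  rwa [hπ_same ℳ hvn] at this

end Proj

section Smul

variable {k : Type} [Field k] {A : Type} [CommRing A] [Algebra k A]
  {𝒜 : ℕ → Submodule k A} [GradedAlgebra 𝒜]
  {M : Type} [AddCommGroup M] [Module k M] [Module A M] [IsScalarTower k A M]
  (ℳ : ℕ → Submodule k M) [Decomposition ℳ]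

lemma hπ_smul (hM : IsGradedModule k A 𝒜 M ℳ) {a : A} (ha : a ∈ 𝒜 1) (v : M) (n : ℕ) :
    hπ ℳ (n + 1) (a • v) = a • hπ ℳ n v := by
  classical
  obtain ⟨s, hs⟩ := hπ_sum ℳ v
  have h1 : ∀ m : ℕ, hπ ℳ (n + 1) (a • hπ ℳ m v) = if m = n then a • hπ ℳ n v else 0 := by
    intro m
    have hmem : a • hπ ℳ m v ∈ ℳ (m + 1) := by
      have := hM.smul_mem 1 m a ha _ (hπ_mem ℳ m v)
      rwa [add_comm] at this
    by_cases h : m = n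
    · subst h; rw [if_pos rfl, hπ_same ℳ hmem]
    · rw [if_neg h]; exact hπ_ne ℳ hmem (by omega)
  have h2 : a • v = ∑ m ∈ s, a • hπ ℳ m v := by rw [← Finset.smul_sum, ← hs]
  rw [h2, map_sum]
  simp only [h1]
  rw [Finset.sum_ite_eq' s n (fun _ => a • hπ ℳ n v)]
  by_cases hn : n ∈ s
  · rw [if_pos hn]
  · rw [if_neg hn]
    have : hπ ℳ n v = 0 := by
      conv_lhs => rw [hs]
      rw [map_sum]
      refine Finset.sum_eq_zero fun m hm => ?_
      exact hπ_ne ℳ (hπ_mem ℳ m v) (by rintro rfl; exact hn hm)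
    rw [this, smul_zero]

lemma hπ_smul_zero (hM : IsGradedModule k A 𝒜 M ℳ) {a : A} (ha : a ∈ 𝒜 1) (v : M) :
    hπ ℳ 0 (a • v) = 0 := by
  classical
  obtain ⟨s, hs⟩ := hπ_sum ℳ v
  have h2 : a • v = ∑ m ∈ s, a • hπ ℳ m v := by rw [← Finset.smul_sum, ← hs]
  rw [h2, map_sum]
  refine Finset.sum_eq_zero fun m hm => ?_
  have hmem : a • hπ ℳ m v ∈ ℳ (m + 1) := by
    have := hM.smul_mem 1 m a ha _ (hπ_mem ℳ m v)
    rwa [add_comm] at this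
  exact hπ_ne ℳ hmem (by omega)

end Smul

section FD

variable {k : Type} [Field k] {A : Type} [CommRing A] [Algebra k A]
  {𝒜 : ℕ → Submodule k A}
  {M : Type} [AddCommGroup M] [Module k M] [Module A M] [IsScalarTower k A M]
  (ℳ : ℕ → Submodule k M) [Decomposition ℳ]

/-- The graded pieces of a finitely generated module over a standard graded ring
are finite dimensional. -/
lemma hilb_fd (hM : IsGradedModule k A 𝒜 M ℳ) {d : ℕ} (x : Fin d → A)
    (hx : ∀ i, x i ∈ 𝒜 1) (hadj : Algebra.adjoin k (Set.range x) = ⊤)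
    (s : Finset M) (hs : Submodule.span A (s : Set M) = ⊤) (n : ℕ) :
    FiniteDimensional k ↥(ℳ n) := by
  classical
  choose sw hsw using hπ_sum ℳ
  set s' : Finset M := s.biUnion (fun w => (sw w).image (fun m => hπ ℳ m w)) with hs'
  -- the finite sets of "monomials times homogeneous generators"
  set F : ℕ → Finset M := fun n => Finset.image
    (fun p : (Σ m : Fin (n + 1), (Fin (m : ℕ) → Fin d)) × {w // w ∈ s'} =>
      (∏ j, x (p.1.2 j)) • (p.2 : M)) Finset.univ with hF
  set q : ℕ → Submodule k M := fun n => Submodule.span k (F n : Set M) ⊓ ℳ n with hq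
  have hqle : ∀ m, q m ≤ ℳ m := fun m => inf_le_right
  -- s' is contained in the union
  have hs'sub : ∀ z ∈ s', z ∈ ⨆ m, q m := by
    intro z hz
    simp only [hs', Finset.mem_biUnion, Finset.mem_image] at hz
    obtain ⟨w, hw, m, hm, rfl⟩ := hz
    have hzF : hπ ℳ m w ∈ F m := by
      simp only [hF, Finset.mem_image]
      refine ⟨⟨⟨⟨0, Nat.succ_pos m⟩, fun j => j.elim0⟩,
        ⟨hπ ℳ m w, by
          simp only [hs', Finset.mem_biUnion, Finset.mem_image]
          exact ⟨w, hw, m, hm, rfl⟩⟩⟩, Finset.mem_univ _, ?_⟩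
      simp
    refine le_iSup q m ?_
    exact ⟨Submodule.subset_span hzF, hπ_mem ℳ m w⟩
  -- closure of the union under the action of A
  have hA : ∀ (a : A) (v : M), v ∈ ⨆ m, q m → a • v ∈ ⨆ m, q m := by
    intro a
    have ha : a ∈ Algebra.adjoin k (Set.range x) := by rw [hadj]; trivial
    induction ha using Algebra.adjoin_induction with
    | mem z hz =>
      obtain ⟨i, rfl⟩ := hz
      intro v hv
      set μ : M →ₗ[k] M := (LinearMap.lsmul A M (x i)).restrictScalars k with hμ
      have hmap : Submodule.map μ (⨆ m, q m) ≤ ⨆ m, q m := by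
        rw [Submodule.map_iSup]
        refine iSup_le fun m => le_trans ?_ (le_iSup q (m + 1))
        have h1 : Submodule.map μ (q m) ≤
            Submodule.map μ (Submodule.span k (F m : Set M)) ⊓ Submodule.map μ (ℳ m) :=
          Submodule.map_inf_le _
        refine le_trans h1 (inf_le_inf ?_ ?_)
        · rw [Submodule.map_span, Submodule.span_le]
          rintro _ ⟨z, hz, rfl⟩
          refine Submodule.subset_span ?_
          simp only [hF, Finset.mem_coe, Finset.mem_image] at hz ⊢
          obtain ⟨⟨⟨m', f⟩, w⟩, -, rfl⟩ := hz
          refine ⟨⟨⟨⟨(m' : ℕ) + 1, by omega⟩, Fin.cases i f⟩, w⟩, Finset.mem_univ _, ?_⟩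
          show (∏ j : Fin ((m' : ℕ) + 1), x (Fin.cases i f j)) • (w : M) = μ _
          rw [Fin.prod_univ_succ]
          simp only [Fin.cases_zero, Fin.cases_succ, hμ]
          rw [mul_smul]
          rfl
        · rintro _ ⟨z, hz, rfl⟩
          have := hM.smul_mem 1 m (x i) (hx i) z hz
          rwa [add_comm] at this
      exact hmap ⟨v, hv, rfl⟩
    | algebraMap r =>
      intro v hv
      rw [algebraMap_smul]
      exact Submodule.smul_mem _ r hv
    | add u w hu hw ihu ihw =>
      intro v hv
      rw [add_smul]
      exact add_mem (ihu v hv) (ihw v hv)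
    | mul u w hu hw ihu ihw =>
      intro v hv
      rw [mul_smul]
      exact ihu _ (ihw v hv)
  -- the union is everything
  have htop : ∀ v : M, v ∈ ⨆ m, q m := by
    intro v
    have hv : v ∈ Submodule.span A (s : Set M) := by rw [hs]; trivial
    induction hv using Submodule.span_induction with
    | mem w hw =>
      rw [hsw w]
      refine Submodule.sum_mem _ fun m hm => ?_
      refine hs'sub _ ?_
      simp only [hs', Finset.mem_biUnion, Finset.mem_image]
      exact ⟨w, hw, m, hm, rfl⟩
    | zero => exact zero_mem _
    | add u w hu hw ihu ihw => exact add_mem ihu ihw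
    | smul a v hv ihv => exact hA a v ihv
  -- conclude
  have hle : ℳ n ≤ Submodule.span k (F n : Set M) := by
    intro v hv
    exact (hmem_of_iSup ℳ hqle hv (htop v)).1
  exact Submodule.finiteDimensional_of_le hle

end FD

section Aux


variable {k : Type} [Field k] {A : Type} [CommRing A] [Algebra k A]
  {𝒜 : ℕ → Submodule k A} [GradedAlgebra 𝒜]
  {M : Type} [AddCommGroup M] [Module k M] [Module A M] [IsScalarTower k A M]
  {ℳ : ℕ → Submodule k M} [Decomposition ℳ]

theorem hilb_aux (hM : IsGradedModule k A 𝒜 M ℳ)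
    (hfd : ∀ n, FiniteDimensional k ↥(ℳ n)) (d : ℕ) :
    ∀ (x : Fin d → A), (∀ i, x i ∈ 𝒜 1) →
    ∀ (N' N : Submodule A M), N' ≤ N →
    (∀ v ∈ N, ∀ n, hπ ℳ n v ∈ N) →
    (∀ v ∈ N', ∀ n, hπ ℳ n v ∈ N') →
    (∃ s : Finset M, (s : Set M) ⊆ (N : Set M) ∧ N.restrictScalars k ≤
      N'.restrictScalars k ⊔
        (span ↥(Algebra.adjoin k (Set.range x)) (s : Set M)).restrictScalars k) →
    ∃ P : Polynomial ℚ, ∃ N₀ : ℕ, ∀ n ≥ N₀,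
      P.eval (n : ℚ) = (Module.finrank k ↥(N.restrictScalars k ⊓ ℳ n) : ℚ)
        - (Module.finrank k ↥(N'.restrictScalars k ⊓ ℳ n) : ℚ) := by
  classical
  induction d with
  | zero =>
    rintro x hx N' N hNN hgrN hgrN' ⟨s, hsN, hsp⟩
    -- the span over the trivial subalgebra is the k-span
    have hred : (span ↥(Algebra.adjoin k (Set.range x)) (s : Set M)).restrictScalars k ≤
        span k (s : Set M) := by
      intro v hv
      induction hv using Submodule.span_induction with
      | mem w hw => exact Submodule.subset_span hw
      | zero => exact zero_mem _
      | add u w hu hw ihu ihw => exact add_mem ihu ihw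
      | smul b v hv ihv =>
        have hb : (b : A) ∈ (⊥ : Subalgebra k A) := by
          have hkey : Algebra.adjoin k (Set.range x) = (⊥ : Subalgebra k A) := by
            rw [Set.range_eq_empty, Algebra.adjoin_empty]
          exact hkey ▸ b.2
        obtain ⟨r, hr⟩ := Algebra.mem_bot.mp hb
        show (b : A) • v ∈ _
        rw [← hr, algebraMap_smul]
        exact Submodule.smul_mem _ r ihv
    choose sw hsw using hπ_sum (ℳ := ℳ) (M := M)
    set D : ℕ := s.sup (fun w => (sw w).sup id) with hD
    have hzero : ∀ w ∈ s, ∀ n > D, hπ ℳ n w = 0 := by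
      intro w hw n hn
      conv_lhs => rw [hsw w]
      rw [map_sum]
      refine Finset.sum_eq_zero fun m hm => ?_
      refine hπ_ne ℳ (hπ_mem ℳ m w) ?_
      have h1 : m ≤ (sw w).sup id := Finset.le_sup (f := id) hm
      have h2 : (sw w).sup id ≤ D := Finset.le_sup (f := fun w => (sw w).sup id) hw
      omega
    have heq : ∀ n > D, N.restrictScalars k ⊓ ℳ n = N'.restrictScalars k ⊓ ℳ n := by
      intro n hn
      refine le_antisymm ?_ (inf_le_inf_right _ ?_)
      · rintro v ⟨hvN, hvℳ⟩
        obtain ⟨a, ha, u, hu, rfl⟩ := Submodule.mem_sup.mp (hsp hvN)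
        have hu0 : hπ ℳ n u = 0 := by
          have : u ∈ span k (s : Set M) := hred hu
          have hker : span k (s : Set M) ≤ LinearMap.ker (hπ ℳ n) := by
            rw [Submodule.span_le]
            intro w hw
            exact hzero w hw n hn
          exact hker this
        have : hπ ℳ n (a + u) = hπ ℳ n a := by rw [map_add, hu0, add_zero]
        have hv' : a + u = hπ ℳ n a := by rw [← this, hπ_same ℳ hvℳ]
        constructor
        · show a + u ∈ N'
          rw [hv']
          exact hgrN' a ha n
        · exact hvℳ
      · intro v hv; exact hNN hv
    refine ⟨0, D + 1, fun n hn => ?_⟩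
    rw [heq n (by omega)]
    simp
  | succ d ih =>
    rintro x hx N' N hNN hgrN hgrN' ⟨s, hsN, hsp⟩
    set y : A := x (Fin.last d) with hy_def
    have hy : y ∈ 𝒜 1 := hx _
    set x' : Fin d → A := x ∘ Fin.castSucc with hx'_def
    have hx' : ∀ i, x' i ∈ 𝒜 1 := fun i => hx _
    set μ : M →ₗ[A] M := LinearMap.lsmul A M y with hμ_def
    set K : Submodule A M := N ⊓ Submodule.comap μ N' with hK_def
    set L : Submodule A M := N' ⊔ Submodule.map μ N with hL_def
    have hN'K : N' ≤ K := le_inf hNN (fun v hv => Submodule.smul_mem N' y hv)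
    have hKN : K ≤ N := inf_le_left
    have hN'L : N' ≤ L := le_sup_left
    have hLN : L ≤ N :=
      sup_le hNN (Submodule.map_le_iff_le_comap.mpr fun v hv => Submodule.smul_mem N y hv)
    -- gradedness of K and L
    have hgrK : ∀ v ∈ K, ∀ n, hπ ℳ n v ∈ K := by
      rintro v ⟨hvN, hvC⟩ n
      refine ⟨hgrN v hvN n, ?_⟩
      show y • hπ ℳ n v ∈ N'
      rw [← hπ_smul ℳ hM hy v n]
      exact hgrN' _ hvC (n + 1)
    have hgrL : ∀ v ∈ L, ∀ n, hπ ℳ n v ∈ L := by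
      intro v hv n
      obtain ⟨a, ha, b, hb, rfl⟩ := Submodule.mem_sup.mp hv
      obtain ⟨u, hu, rfl⟩ := hb
      rw [map_add]
      refine add_mem (hN'L (hgrN' a ha n)) ?_
      show hπ ℳ n (y • u) ∈ L
      cases n with
      | zero => rw [hπ_smul_zero ℳ hM hy u]; exact zero_mem _
      | succ m =>
        rw [hπ_smul ℳ hM hy u m]
        exact Submodule.mem_sup_right ⟨hπ ℳ m u, hgrN u hu m, rfl⟩
    -- finite generation of N over L
    have hfgL : ∃ t : Finset M, (t : Set M) ⊆ (N : Set M) ∧ N.restrictScalars k ≤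
        L.restrictScalars k ⊔
          (span ↥(Algebra.adjoin k (Set.range x')) (t : Set M)).restrictScalars k := by
      refine ⟨s, hsN, le_trans hsp (sup_le ?_ ?_)⟩
      · exact le_trans (fun v hv => hN'L hv) le_sup_left
      · exact hilb_span_reduce x L (s : Set M)
          (fun w hw => Submodule.mem_sup_right ⟨w, hsN hw, rfl⟩)
    -- finite generation of K over N'
    have hBnoeth : IsNoetherianRing ↥(Algebra.adjoin k (Set.range x)) := by
      have hfg : (Algebra.adjoin k (Set.range x)).FG :=
        ⟨Finset.univ.image x, by rw [Finset.coe_image, Finset.coe_univ, Set.image_univ]⟩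
      have := (Subalgebra.fg_iff_finiteType _).mp hfg
      exact Algebra.FiniteType.isNoetherianRing k _
    have hfgK : ∃ t : Finset M, (t : Set M) ⊆ (K : Set M) ∧ K.restrictScalars k ≤
        N'.restrictScalars k ⊔
          (span ↥(Algebra.adjoin k (Set.range x')) (t : Set M)).restrictScalars k := by
      obtain ⟨t, htK, ht⟩ := hilb_fg_sub (Algebra.adjoin k (Set.range x)) hBnoeth
        N' N K hN'K hKN s hsp
      refine ⟨t, htK, le_trans ht (sup_le le_sup_left ?_)⟩
      have hyt : ∀ w ∈ (t : Set M), y • w ∈ N' := fun w hw => (htK hw).2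
      exact le_trans (hilb_span_reduce x N' (t : Set M) hyt) (sup_le le_sup_left le_sup_right)
    obtain ⟨P₁, N₁, hP₁⟩ := ih x' hx' N' K hN'K
      (fun v hv n => hgrK v hv n) (fun v hv n => hgrN' v hv n) hfgK
    obtain ⟨P₂, N₂, hP₂⟩ := ih x' hx' L N hLN
      (fun v hv n => hgrN v hv n) (fun v hv n => hgrL v hv n) hfgL
    -- the rank-nullity identity in each degree
    have key : ∀ n : ℕ,
        Module.finrank k ↥(N.restrictScalars k ⊓ ℳ n)
          + Module.finrank k ↥(N'.restrictScalars k ⊓ ℳ (n + 1))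
        = Module.finrank k ↥(K.restrictScalars k ⊓ ℳ n)
          + Module.finrank k ↥(L.restrictScalars k ⊓ ℳ (n + 1)) := by
      intro n
      set V : Submodule k M := N.restrictScalars k ⊓ ℳ n with hV_def
      set W : Submodule k M := L.restrictScalars k ⊓ ℳ (n + 1) with hW_def
      haveI : FiniteDimensional k ↥V := by
        haveI := hfd n; exact Submodule.finiteDimensional_of_le inf_le_right
      haveI : FiniteDimensional k ↥W := by
        haveI := hfd (n + 1); exact Submodule.finiteDimensional_of_le inf_le_right
      set S' : Submodule k ↥W := Submodule.comap W.subtype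
        (N'.restrictScalars k ⊓ ℳ (n + 1)) with hS'_def
      have hsmul_mem : ∀ v : ↥V, y • (v : M) ∈ W := by
        rintro ⟨v, hvN, hvℳ⟩
        constructor
        · exact Submodule.mem_sup_right ⟨v, hvN, rfl⟩
        · have := hM.smul_mem 1 n y hy v hvℳ
          rwa [add_comm] at this
      set φ₀ : ↥V →ₗ[k] ↥W := LinearMap.codRestrict W
        (((LinearMap.lsmul A M y).restrictScalars k) ∘ₗ V.subtype) hsmul_mem with hφ₀_def
      set φ : ↥V →ₗ[k] ↥W ⧸ S' := S'.mkQ ∘ₗ φ₀ with hφ_def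
      -- surjectivity
      have hsurj : Function.Surjective φ := by
        intro c
        obtain ⟨w, rfl⟩ := Submodule.Quotient.mk_surjective S' c
        obtain ⟨hwL, hwℳ⟩ := w.2
        obtain ⟨a, ha, b, hb, hab⟩ := Submodule.mem_sup.mp hwL
        obtain ⟨u0, hu0, rfl⟩ := hb
        have hcomp : (w : M) = hπ ℳ (n + 1) a + y • hπ ℳ n u0 := by
          conv_lhs => rw [← hπ_same ℳ hwℳ, ← hab]
          have hμu : μ u0 = y • u0 := rfl
          rw [map_add, hμu, hπ_smul ℳ hM hy u0 n]
        refine ⟨⟨hπ ℳ n u0, hgrN u0 hu0 n, hπ_mem ℳ n u0⟩, ?_⟩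
        show Submodule.Quotient.mk (φ₀ _) = Submodule.Quotient.mk w
        rw [Submodule.Quotient.eq]
        have hval : (φ₀ ⟨hπ ℳ n u0, hgrN u0 hu0 n, hπ_mem ℳ n u0⟩ : M) - (w : M)
            = -(hπ ℳ (n + 1) a) := by
          show y • hπ ℳ n u0 - (w : M) = -(hπ ℳ (n + 1) a)
          rw [hcomp]; ring_nf; abel
        have : (φ₀ ⟨hπ ℳ n u0, hgrN u0 hu0 n, hπ_mem ℳ n u0⟩ - w : ↥W) ∈ S' := by
          show ((φ₀ _ - w : ↥W) : M) ∈ N'.restrictScalars k ⊓ ℳ (n + 1)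
          rw [Submodule.coe_sub, hval]
          exact neg_mem ⟨hgrN' a ha (n + 1), hπ_mem ℳ (n + 1) a⟩
        exact this
      -- kernel
      have hker : LinearMap.ker φ = Submodule.comap V.subtype
          (K.restrictScalars k ⊓ ℳ n) := by
        ext v
        obtain ⟨hvN, hvℳ⟩ := v.2
        simp only [LinearMap.mem_ker, hφ_def, LinearMap.comp_apply, Submodule.mkQ_apply,
          Submodule.Quotient.mk_eq_zero, Submodule.mem_comap]
        constructor
        · intro h
          have : y • (v : M) ∈ N'.restrictScalars k ⊓ ℳ (n + 1) := h
          exact ⟨⟨hvN, this.1⟩, hvℳ⟩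
        · rintro ⟨⟨-, hvK⟩, -⟩
          show y • (v : M) ∈ N'.restrictScalars k ⊓ ℳ (n + 1)
          refine ⟨hvK, ?_⟩
          have := hM.smul_mem 1 n y hy v hvℳ
          rwa [add_comm] at this
      -- the dimension count
      have e1 : Module.finrank k ↥(LinearMap.range φ) + Module.finrank k ↥(LinearMap.ker φ)
          = Module.finrank k ↥V := LinearMap.finrank_range_add_finrank_ker φ
      have e2 : LinearMap.range φ = ⊤ := LinearMap.range_eq_top.mpr hsurj
      have e3 : Module.finrank k (↥W ⧸ S') + Module.finrank k ↥S'
          = Module.finrank k ↥W := Submodule.finrank_quotient_add_finrank S'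
      have e4 : Module.finrank k ↥S' = Module.finrank k ↥(N'.restrictScalars k ⊓ ℳ (n + 1)) := by
        have hle : N'.restrictScalars k ⊓ ℳ (n + 1) ≤ W :=
          inf_le_inf_right _ (fun v hv => hN'L hv)
        exact LinearEquiv.finrank_eq (Submodule.comapSubtypeEquivOfLe hle)
      have e5 : Module.finrank k ↥(LinearMap.ker φ)
          = Module.finrank k ↥(K.restrictScalars k ⊓ ℳ n) := by
        rw [hker]
        have hle : K.restrictScalars k ⊓ ℳ n ≤ V :=
          inf_le_inf_right _ (fun v hv => hKN hv)
        exact LinearEquiv.finrank_eq (Submodule.comapSubtypeEquivOfLe hle)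
      have e6 : Module.finrank k ↥(LinearMap.range φ) = Module.finrank k (↥W ⧸ S') := by
        rw [e2, _root_.finrank_top]
      omega
    -- assemble the difference equation
    set g : ℕ → ℚ := fun n => (Module.finrank k ↥(N.restrictScalars k ⊓ ℳ n) : ℚ)
      - (Module.finrank k ↥(N'.restrictScalars k ⊓ ℳ n) : ℚ) with hg_def
    set Q : Polynomial ℚ := P₂.comp (X + 1) - P₁ with hQ_def
    have hdiff : ∀ n ≥ max N₁ N₂, g (n + 1) = g n + Q.eval (n : ℚ) := by
      intro n hn
      have h₁ := hP₁ n (le_trans (le_max_left _ _) hn)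
      have h₂ := hP₂ (n + 1) (by omega)
      have hkey := key n
      have hkeyQ : (Module.finrank k ↥(N.restrictScalars k ⊓ ℳ n) : ℚ)
          + (Module.finrank k ↥(N'.restrictScalars k ⊓ ℳ (n + 1)) : ℚ)
          = (Module.finrank k ↥(K.restrictScalars k ⊓ ℳ n) : ℚ)
          + (Module.finrank k ↥(L.restrictScalars k ⊓ ℳ (n + 1)) : ℚ) := by
        exact_mod_cast congrArg (fun z : ℕ => (z : ℚ)) hkey
      have hQeval : Q.eval (n : ℚ) = P₂.eval ((n : ℚ) + 1) - P₁.eval (n : ℚ) := by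
        rw [hQ_def, eval_sub, eval_comp, eval_add, eval_X, eval_one]
      have hcast : ((n + 1 : ℕ) : ℚ) = (n : ℚ) + 1 := by push_cast; ring
      rw [hg_def, hQeval]
      rw [hcast] at h₂
      simp only [hg_def]
      linarith
    exact hilb_poly_of_diff g Q (max N₁ N₂) hdiff

end Aux

/-- Hilbert. Let `A` be a standard graded ring over a field `k` and
`M` a finitely generated graded `A`-module.  Then there is a polynomial `P` with rational
coefficients such that `P(n) = dim_k M_n` for all sufficiently large `n`. -/
theorem stmt10 (k : Type) [Field k] (A : Type) [CommRing A] [Algebra k A]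
    (𝒜 : ℕ → Submodule k A) [GradedAlgebra 𝒜] (hA : IsStandardGraded k A 𝒜)
    (M : Type) [AddCommGroup M] [Module k M] [Module A M] [IsScalarTower k A M]
    [Module.Finite A M]
    (ℳ : ℕ → Submodule k M) [DirectSum.Decomposition ℳ]
    (hM : IsGradedModule k A 𝒜 M ℳ) :
    ∃ P : Polynomial ℚ, ∃ N : ℕ, ∀ n ≥ N,
      P.eval (n : ℚ) = Module.finrank k (ℳ n) := by

  classical
  haveI := hA.finite_one
  obtain ⟨r, f, hf⟩ := Module.Finite.exists_fin (R := k) (M := ↥(𝒜 1))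
  set x : Fin r → A := fun i => ((f i : ↥(𝒜 1)) : A) with hx_def
  have hx : ∀ i, x i ∈ 𝒜 1 := fun i => (f i).2
  have hadj : Algebra.adjoin k (Set.range x) = ⊤ := by
    refine le_antisymm le_top ?_
    rw [← hA.adjoin_one]
    refine Algebra.adjoin_le ?_
    intro a ha
    have h1 : (⟨a, ha⟩ : ↥(𝒜 1)) ∈ Submodule.span k (Set.range f) := by rw [hf]; trivial
    have h2 : a ∈ Submodule.map (𝒜 1).subtype (Submodule.span k (Set.range f)) :=
      ⟨⟨a, ha⟩, h1, rfl⟩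
    rw [Submodule.map_span, ← Set.range_comp] at h2
    exact Algebra.span_le_adjoin k _ h2
  obtain ⟨s, hs⟩ := Module.finite_def.mp ‹Module.Finite A M›
  have hfd : ∀ n, FiniteDimensional k ↥(ℳ n) := hilb_fd ℳ hM x hx hadj s hs
  have hfg : (s : Set M) ⊆ ((⊤ : Submodule A M) : Set M) ∧
      (⊤ : Submodule A M).restrictScalars k ≤
        (⊥ : Submodule A M).restrictScalars k ⊔
          (Submodule.span ↥(Algebra.adjoin k (Set.range x))
            (s : Set M)).restrictScalars k := by
    refine ⟨fun w _ => trivial, fun v hvt => ?_⟩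
    have hv : v ∈ Submodule.span A (s : Set M) := by rw [hs]; trivial
    clear hvt
    refine Submodule.mem_sup_right ?_
    induction hv using Submodule.span_induction with
    | mem w hw => exact Submodule.subset_span hw
    | zero => exact zero_mem _
    | add u w hu hw ihu ihw => exact add_mem ihu ihw
    | smul a v hv ihv =>
      have ha : a ∈ Algebra.adjoin k (Set.range x) := by rw [hadj]; trivial
      show (⟨a, ha⟩ : ↥(Algebra.adjoin k (Set.range x))) • v ∈
        Submodule.span ↥(Algebra.adjoin k (Set.range x)) (s : Set M)
      exact Submodule.smul_mem _ _ ihv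
  obtain ⟨P, N₀, hP⟩ := hilb_aux hM hfd r x hx ⊥ ⊤ bot_le
    (fun v _ n => trivial)
    (fun v hv n => by
      rw [Submodule.mem_bot] at hv; subst hv; rw [map_zero]; exact zero_mem _)
    ⟨s, hfg.1, hfg.2⟩
  refine ⟨P, N₀, fun n hn => ?_⟩
  rw [hP n hn]
  have h1 : (⊤ : Submodule A M).restrictScalars k ⊓ ℳ n = ℳ n := by
    rw [Submodule.restrictScalars_top, top_inf_eq]
  have h2 : (⊥ : Submodule A M).restrictScalars k ⊓ ℳ n = ⊥ := by
    rw [Submodule.restrictScalars_bot, bot_inf_eq]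
  rw [h1, h2]
  simp
end
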